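/- Let K ≥ 2, m ≥ 2, let 𝒦 = (K_0,…,K_{m−1}) be a partition of {0,…,K−1} into nonempty sets, and let P be a nonempty subset of Q_m. Then dim_H {x ∈ Σ_K : μ_𝒦(x) ∩ P ≠ ∅} ≤ sup{g_𝒦(p) : p ∈ P}. -/

import Mathlib

open Filter Set MeasureTheory Topology TopologicalSpace

noncomputable section

/-- The symbolic space `Σ_K` on `K` symbols: sequences `ℕ → Fin K`. -/
def SymbSp (K : ℕ) : Type := ℕ → Fin K

namespace SymbSp

variable {K : ℕ}

theorem exists_ne {x y : SymbSp K} (h : ¬x = y) : ∃ i, x i ≠ y i := by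
  by_contra hc
  push_neg at hc
  exact h (funext hc)

open Classical in
/-- The metric `ρ(x,y) = K^{-δ(x,y)}` on `Σ_K`. -/
def sdist (x y : SymbSp K) : ℝ :=
  if h : x = y then 0 else ((K : ℝ))⁻¹ ^ Nat.find (exists_ne h)

theorem sdist_self (x : SymbSp K) : sdist x x = 0 := by
  unfold sdist
  exact dif_pos rfl

open Classical in
theorem sdist_eq {x y : SymbSp K} (h : ¬x = y) :
    sdist x y = ((K : ℝ))⁻¹ ^ Nat.find (exists_ne h) := by
  unfold sdist
  exact dif_neg h

theorem sdist_nonneg' (x y : SymbSp K) : 0 ≤ sdist x y := by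
  unfold sdist
  split
  · exact le_rfl
  · positivity

theorem inv_cast_le_one (K : ℕ) : ((K : ℝ))⁻¹ ≤ 1 := by
  rcases Nat.eq_zero_or_pos K with h | h
  · simp [h]
  · exact inv_le_one_of_one_le₀ (by exact_mod_cast h)

open Classical in
theorem eq_of_lt_find {x y : SymbSp K} (h : ¬x = y) {i : ℕ}
    (hi : i < Nat.find (exists_ne h)) : x i = y i :=
  not_not.mp (Nat.find_min (exists_ne h) hi)

open Classical in
theorem sdist_le_of_agree {x y : SymbSp K} {n : ℕ} (h : ∀ i < n, x i = y i) :
    sdist x y ≤ ((K : ℝ))⁻¹ ^ n := by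
  by_cases hxy : x = y
  · rw [hxy, sdist_self]; positivity
  · rw [sdist_eq hxy]
    apply pow_le_pow_of_le_one (by positivity) (inv_cast_le_one K)
    rw [Nat.le_find_iff]
    intro m hm
    simp only [ne_eq, not_not]
    exact h m hm

open Classical in
theorem sdist_comm (x y :  SymbSp K) : sdist x y = sdist y x := by
  by_cases h : x = y
  · rw [h]
  · rw [sdist_eq h, sdist_eq (fun hyx => h hyx.symm)]
    congr 1
    exact le_antisymm (Nat.find_mono fun n hn => hn.symm)
      (Nat.find_mono fun n hn => hn.symm)

open Classical in
theorem sdist_le_max (x y z : SymbSp K) : sdist x z ≤ max (sdist x y) (sdist y z) := by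
  by_cases hxz : x = z
  · rw [hxz, sdist_self]
    exact le_max_of_le_left (sdist_nonneg' _ _)
  by_cases hxy : x = y
  · rw [hxy]; exact le_max_right _ _
  by_cases hyz : y = z
  · rw [← hyz]; exact le_max_left _ _
  rcases le_total (Nat.find (exists_ne hxy)) (Nat.find (exists_ne hyz)) with hle | hle
  · refine le_max_of_le_left ?_
    rw [sdist_eq hxy]
    exact sdist_le_of_agree fun i hi =>
      (eq_of_lt_find hxy hi).trans (eq_of_lt_find hyz (lt_of_lt_of_le hi hle))
  · refine le_max_of_le_right ?_
    rw [sdist_eq hyz]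
    exact sdist_le_of_agree fun i hi =>
      (eq_of_lt_find hxy (lt_of_lt_of_le hi hle)).trans (eq_of_lt_find hyz hi)

open Classical in
theorem eq_of_sdist_eq_zero {x y : SymbSp K} (h : sdist x y = 0) : x = y := by
  by_contra hxy
  rw [sdist_eq hxy] at h
  have hK : (0 : ℝ) < (K : ℝ) := by exact_mod_cast Fin.pos (x 0)
  exact absurd h (ne_of_gt (pow_pos (inv_pos.mpr hK) _))

instance : MetricSpace (SymbSp K) where
  dist := sdist
  dist_self := sdist_self
  dist_comm := sdist_comm
  dist_triangle x y z :=
    (sdist_le_max x y z).trans (max_le_add_of_nonneg (sdist_nonneg' _ _) (sdist_nonneg' _ _))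
  eq_of_dist_eq_zero := fun h => eq_of_sdist_eq_zero h

instance : MeasurableSpace (SymbSp K) := borel _

instance : BorelSpace (SymbSp K) := ⟨rfl⟩

instance : SeparableSpace (SymbSp K) := by
  obtain hK | hK | hK : K = 0 ∨ K = 1 ∨ 2 ≤ K := by omega
  · subst hK
    haveI : IsEmpty (SymbSp 0) := ⟨fun x => (x 0).elim0⟩
    exact ⟨⟨Set.univ, Set.countable_univ, dense_univ⟩⟩
  · subst hK
    haveI : Subsingleton (SymbSp 1) := ⟨fun x y => funext fun i => Subsingleton.elim _ _⟩
    exact ⟨⟨Set.univ, Set.countable_univ, dense_univ⟩⟩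
  · refine ⟨⟨Set.range (fun w : (Σ n : ℕ, (Fin n → Fin K)) =>
      (fun i => if h : i < w.1 then w.2 ⟨i, h⟩ else ⟨0, by omega⟩ : SymbSp K)),
      Set.countable_range _, ?_⟩⟩
    rw [Metric.dense_iff]
    intro x r hr
    obtain ⟨n, hn⟩ : ∃ n : ℕ, ((K : ℝ))⁻¹ ^ n < r :=
      exists_pow_lt_of_lt_one hr (inv_lt_one_of_one_lt₀ (by exact_mod_cast hK))
    refine ⟨(fun i => if h : i < n then x i else ⟨0, by omega⟩ : SymbSp K),
      ?_, ⟨⟨n, fun j => x j⟩, rfl⟩⟩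
    refine Metric.mem_ball.mpr ?_
    exact lt_of_le_of_lt (sdist_le_of_agree fun i hi => dif_pos hi) hn

instance : SecondCountableTopology (SymbSp K) :=
  UniformSpace.secondCountable_of_separable _

end SymbSp

/-- The shift map `σ_K` on `Σ_K`. -/
def shift (K : ℕ) : SymbSp K → SymbSp K := fun x i => x (i + 1)

end

/-!
Let `H = g_𝒦 · ln K`. Weighting each letter of class `i` by `q i / #K_i` gives a probability on the
alphabet under which every word of length `n` with class frequencies `q` has weight `exp (-n H(q))`,
so there are at most `exp (n H(q))` such words. Words of length `n` have at most `(n + 1)^m`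
frequency vectors and `H` is uniformly continuous on the cube, hence for `s > sup g_𝒦(P)` and small
`δ` at most `(n + 1)^m K^{ns}` words of length `n` have frequencies `δ`-close to `P`. Every point of
the set has infinitely many such prefixes; their cylinders have diameter `K^{-n}`, and
`Σ_n (n + 1)^m K^{n(s - d)} < ∞` makes the set `μH[d]`-null for every `d > s`.
-/

open Finset Real
open scoped ENNReal

section Entropy

variable {α ι : Type*} [Fintype ι] {𝒦 : ι → Finset α}

noncomputable def classEntropy (𝒦 : ι → Finset α) (q : ι → ℝ) : ℝ :=
  ∑ i, -(q i * log (q i / (𝒦 i).card))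

omit [Fintype ι] in
theorem continuous_mul_log_div (k : ℝ) : Continuous fun x : ℝ => x * log (x / k) := by
  rcases eq_or_ne k 0 with rfl | hk
  · simpa using continuous_const
  · have hscale : (fun x : ℝ => x * log (x / k)) = fun x => k * (x / k * log (x / k)) := by
      funext x
      field_simp
    rw [hscale]
    exact continuous_const.mul (continuous_mul_log.comp (continuous_id.div_const k))

theorem continuous_classEntropy (𝒦 : ι → Finset α) : Continuous (classEntropy 𝒦) :=
  continuous_finsetSum _ fun i _ => ((continuous_mul_log_div _).comp (continuous_apply i)).neg

theorem natCast_mul_classEntropy_div (n : ℕ) (c : ι → ℕ) :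
    n * classEntropy 𝒦 (fun i => c i / n) = ∑ i, -(c i * log (c i / (n * (𝒦 i).card))) := by
  rw [classEntropy, mul_sum]
  refine sum_congr rfl fun i _ => ?_
  rcases n.eq_zero_or_pos with rfl | hn
  · simp
  · rw [div_div, mul_neg, ← mul_assoc, mul_div_cancel₀ _ (by positivity)]

end Entropy

section TypeClasses

variable {α ι : Type*} {𝒦 : ι → Finset α}

theorem exists_forall_mem_iff_eq (hdisj : ∀ i j, i ≠ j → Disjoint (𝒦 i) (𝒦 j))
    (hcover : ∀ a, ∃ i, a ∈ 𝒦 i) : ∃ f : α → ι, ∀ a i, a ∈ 𝒦 i ↔ f a = i := by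
  choose f hf using hcover
  refine ⟨f, fun a i => ⟨fun ha => ?_, fun h => h ▸ hf a⟩⟩
  by_contra hne
  exact disjoint_left.1 (hdisj _ _ hne) (hf a) ha

variable [DecidableEq α]

def classCount (𝒦 : ι → Finset α) {n : ℕ} (w : Fin n → α) (i : ι) : ℕ :=
  #{j | w j ∈ 𝒦 i}

noncomputable def classFreq (𝒦 : ι → Finset α) (x : ℕ → α) (n : ℕ) (i : ι) : ℝ :=
  (#{j ∈ range n | x j ∈ 𝒦 i} : ℝ) / n

theorem classFreq_eq (x : ℕ → α) (n : ℕ) :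
    classFreq 𝒦 x n = fun i => (classCount 𝒦 (fun j : Fin n => x j) i : ℝ) / n := by
  funext i
  rw [classFreq, classCount, card_filter, card_filter,
    Fin.sum_univ_eq_sum_range (fun j => if x j ∈ 𝒦 i then 1 else 0)]

theorem classFreq_mem_Icc (x : ℕ → α) (n : ℕ) : classFreq 𝒦 x n ∈ Set.Icc 0 1 :=
  ⟨fun _ => div_nonneg (Nat.cast_nonneg _) (Nat.cast_nonneg _), fun _ => div_le_one_of_le₀
    (Nat.cast_le.2 ((card_filter_le _ _).trans (card_range n).le)) (Nat.cast_nonneg _)⟩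

variable [Fintype ι] [DecidableEq ι]

theorem sum_classCount (hdisj : ∀ i j, i ≠ j → Disjoint (𝒦 i) (𝒦 j))
    (hcover : ∀ a, ∃ i, a ∈ 𝒦 i) {n : ℕ} (w : Fin n → α) :
    ∑ i, classCount 𝒦 w i = n := by
  obtain ⟨f, hf⟩ := exists_forall_mem_iff_eq hdisj hcover
  simp only [classCount, hf]
  simpa using (card_eq_sum_card_fiberwise (s := univ) fun j _ => mem_univ (f (w j))).symm

variable [Fintype α]

theorem card_classCount_eq_mul_prod_le_one (hdisj : ∀ i j, i ≠ j → Disjoint (𝒦 i) (𝒦 j))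
    (hcover : ∀ a, ∃ i, a ∈ 𝒦 i) {u : ι → ℝ} (hu : ∀ i, 0 ≤ u i)
    (hsum : ∑ i, (𝒦 i).card * u i ≤ 1) {n : ℕ} (c : ι → ℕ) :
    (#{w : Fin n → α | classCount 𝒦 w = c} : ℝ) * ∏ i, u i ^ c i ≤ 1 := by
  obtain ⟨f, hf⟩ := exists_forall_mem_iff_eq hdisj hcover
  have hweight : ∑ a, u (f a) ≤ 1 := by
    rw [← sum_fiberwise' univ f u]
    refine le_of_eq_of_le (sum_congr rfl fun i _ => ?_) hsum
    have hfiber : ({a | f a = i} : Finset α) = 𝒦 i := by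
      ext a
      simp [hf]
    rw [sum_const, nsmul_eq_mul, hfiber]
  have hword : ∀ w : Fin n → α, classCount 𝒦 w = c → ∏ j, u (f (w j)) = ∏ i, u i ^ c i := by
    rintro w rfl
    rw [← prod_fiberwise' univ (fun j => f (w j)) u]
    refine prod_congr rfl fun i _ => ?_
    simp [classCount, hf]
  calc (#{w : Fin n → α | classCount 𝒦 w = c} : ℝ) * ∏ i, u i ^ c i
      = ∑ w : Fin n → α with classCount 𝒦 w = c, ∏ j, u (f (w j)) := by
        rw [sum_congr rfl fun w hw => hword w (mem_filter.1 hw).2, sum_const, nsmul_eq_mul]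
    _ ≤ ∑ w : Fin n → α, ∏ j, u (f (w j)) :=
        sum_le_sum_of_subset_of_nonneg (filter_subset _ _)
          fun w _ _ => prod_nonneg fun j _ => hu _
    _ = (∑ a, u (f a)) ^ n := (Fintype.sum_pow (fun a => u (f a)) n).symm
    _ ≤ 1 := pow_le_one₀ (sum_nonneg fun a _ => hu _) hweight

theorem card_classCount_eq_le_exp (hdisj : ∀ i j, i ≠ j → Disjoint (𝒦 i) (𝒦 j))
    (hcover : ∀ a, ∃ i, a ∈ 𝒦 i) (hne : ∀ i, (𝒦 i).Nonempty) {n : ℕ} {c : ι → ℕ}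
    (hc : ∑ i, c i = n) :
    (#{w : Fin n → α | classCount 𝒦 w = c} : ℝ) ≤
      exp (n * classEntropy 𝒦 (fun i => c i / n)) := by
  have hk : ∀ i, (0 : ℝ) < (𝒦 i).card := fun i => by exact_mod_cast (hne i).card_pos
  set u : ι → ℝ := fun i => c i / (n * (𝒦 i).card) with hu
  have hsum : ∑ i, (𝒦 i).card * u i ≤ 1 :=
    calc ∑ i, (𝒦 i).card * u i = (∑ i, c i : ℕ) / n := by
          push_cast
          rw [sum_div]
          refine sum_congr rfl fun i _ => ?_
          simp only [hu]
          field_simp [(hk i).ne']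
      _ ≤ 1 := by rw [hc]; exact div_self_le_one _
  have hweight : (∏ i, u i ^ c i) * exp (n * classEntropy 𝒦 (fun i => c i / n)) = 1 := by
    rw [natCast_mul_classEntropy_div, exp_sum, ← prod_mul_distrib]
    refine prod_eq_one fun i _ => ?_
    rcases (c i).eq_zero_or_pos with h | h
    · simp [h]
    · have hn : 0 < n := hc ▸ h.trans_le (single_le_sum (fun j _ => Nat.zero_le (c j)) (mem_univ i))
      have hui : 0 < u i := div_pos (by exact_mod_cast h) (mul_pos (by exact_mod_cast hn) (hk i))
      change u i ^ c i * exp (-(c i * log (u i))) = 1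
      rw [exp_neg, exp_nat_mul, exp_log hui, mul_inv_cancel₀ (pow_ne_zero _ hui.ne')]
  calc (#{w : Fin n → α | classCount 𝒦 w = c} : ℝ)
      = #{w : Fin n → α | classCount 𝒦 w = c} * (∏ i, u i ^ c i) *
          exp (n * classEntropy 𝒦 (fun i => c i / n)) := by rw [mul_assoc, hweight, mul_one]
    _ ≤ 1 * exp (n * classEntropy 𝒦 (fun i => c i / n)) := by
        gcongr
        exact card_classCount_eq_mul_prod_le_one hdisj hcover (fun i => by positivity) hsum c
    _ = exp (n * classEntropy 𝒦 (fun i => c i / n)) := one_mul _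

theorem card_classCount_div_mem_le (hdisj : ∀ i j, i ≠ j → Disjoint (𝒦 i) (𝒦 j))
    (hcover : ∀ a, ∃ i, a ∈ 𝒦 i) (hne : ∀ i, (𝒦 i).Nonempty) {S : Set (ι → ℝ)}
    [DecidablePred (· ∈ S)] {h : ℝ}
    (hS : ∀ q ∈ S, classEntropy 𝒦 q ≤ h) (n : ℕ) :
    (#{w : Fin n → α | (fun i => (classCount 𝒦 w i : ℝ) / n) ∈ S} : ℝ) ≤
      (n + 1) ^ Fintype.card ι * exp (n * h) := by
  set s : Finset (Fin n → α) := {w | (fun i => (classCount 𝒦 w i : ℝ) / n) ∈ S}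
  have himage : s.image (classCount 𝒦) ⊆ Fintype.piFinset fun _ => range (n + 1) := by
    simp only [subset_iff, Finset.mem_image, Fintype.mem_piFinset, Finset.mem_range]
    rintro _ ⟨w, -, rfl⟩ i
    exact Nat.lt_succ_of_le ((card_filter_le _ _).trans (by simp))
  have hfiber : ∀ c ∈ s.image (classCount 𝒦),
      (#{w ∈ s | classCount 𝒦 w = c} : ℝ) ≤ exp (n * h) := by
    simp only [Finset.mem_image]
    rintro _ ⟨w, hw, rfl⟩
    calc (#{v ∈ s | classCount 𝒦 v = classCount 𝒦 w} : ℝ)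
        ≤ #{v : Fin n → α | classCount 𝒦 v = classCount 𝒦 w} := by
          exact_mod_cast Finset.card_le_card (filter_subset_filter _ (subset_univ s))
      _ ≤ exp (n * classEntropy 𝒦 fun i => classCount 𝒦 w i / n) :=
          card_classCount_eq_le_exp hdisj hcover hne (sum_classCount hdisj hcover w)
      _ ≤ exp (n * h) := by
          gcongr
          exact hS _ (mem_filter.1 hw).2
  calc (#s : ℝ) = ∑ c ∈ s.image (classCount 𝒦), (#{w ∈ s | classCount 𝒦 w = c} : ℝ) := by
        exact_mod_cast card_eq_sum_card_image (classCount 𝒦) s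
    _ ≤ ∑ c ∈ s.image (classCount 𝒦), exp (n * h) := sum_le_sum hfiber
    _ = #(s.image (classCount 𝒦)) * exp (n * h) := by rw [sum_const, nsmul_eq_mul]
    _ ≤ (n + 1) ^ Fintype.card ι * exp (n * h) := by
        gcongr
        exact_mod_cast (Finset.card_le_card himage).trans_eq (by simp)

end TypeClasses

theorem summable_succ_pow_mul_geometric (k : ℕ) {r : ℝ} (h0 : 0 < r) (h1 : r < 1) :
    Summable fun n : ℕ => ((n : ℝ) + 1) ^ k * r ^ n := by
  have hshift := (summable_nat_add_iff (f := fun n : ℕ => (n : ℝ) ^ k * r ^ n) 1).2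
    (summable_pow_mul_geometric_of_norm_lt_one (R := ℝ) k (by rwa [Real.norm_of_nonneg h0.le]))
  refine (summable_mul_left_iff h0.ne').1 (hshift.congr fun n => ?_)
  push_cast
  ring

namespace SymbSp

variable {K : ℕ}

def cylinder {n : ℕ} (w : Fin n → Fin K) : Set (SymbSp K) :=
  {x | ∀ j : Fin n, x j = w j}

theorem ediam_cylinder_le {n : ℕ} (w : Fin n → Fin K) :
    Metric.ediam (cylinder w) ≤ ENNReal.ofReal ((K : ℝ)⁻¹ ^ n) :=
  Metric.ediam_le_of_forall_dist_le fun _ hx _ hy =>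
    sdist_le_of_agree fun j hj => (hx ⟨j, hj⟩).trans (hy ⟨j, hj⟩).symm

theorem hausdorffMeasure_eq_zero_of_frequently_mem_cylinder (hK : 1 < K) {d : ℝ} (hd : 0 ≤ d)
    {s : Set (SymbSp K)} (V : ∀ n, Finset (Fin n → Fin K))
    (hs : ∀ x ∈ s, ∃ᶠ n in atTop, (fun j : Fin n => x j) ∈ V n)
    (hV : ∑' n, (#(V n) : ℝ≥0∞) * ENNReal.ofReal ((K : ℝ)⁻¹ ^ n) ^ d ≠ ∞) :
    μH[d] s = 0 := by
  set b : ℕ → ℝ≥0∞ := fun n => #(V n) * ENNReal.ofReal ((K : ℝ)⁻¹ ^ n) ^ d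
  let t : ∀ N : ℕ, (Σ k, V (k + N)) → Set (SymbSp K) := fun _ w => cylinder w.2.1
  have hr : Tendsto (fun N : ℕ => ENNReal.ofReal ((K : ℝ)⁻¹ ^ N)) atTop (𝓝 0) := by
    simpa using ENNReal.tendsto_ofReal (tendsto_pow_atTop_nhds_zero_of_lt_one
      (by positivity) (inv_lt_one_of_one_lt₀ (by exact_mod_cast hK)))
  have ht : ∀ N i, Metric.ediam (t N i) ≤ ENNReal.ofReal ((K : ℝ)⁻¹ ^ N) := fun N i =>
    (ediam_cylinder_le _).trans (ENNReal.ofReal_le_ofReal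
      (pow_le_pow_of_le_one (by positivity) (inv_cast_le_one K) (Nat.le_add_left N i.1)))
  have hst : ∀ N, s ⊆ ⋃ i, t N i := by
    intro N x hx
    obtain ⟨M, hNM, hM⟩ := (hs x hx).forall_exists_of_atTop N
    obtain ⟨k, rfl⟩ := Nat.exists_eq_add_of_le' hNM
    exact mem_iUnion.2 ⟨⟨k, _, hM⟩, fun j => rfl⟩
  have htsum : ∀ N, ∑' i, Metric.ediam (t N i) ^ d ≤ ∑' k, b (k + N) := by
    intro N
    rw [ENNReal.tsum_sigma']
    refine ENNReal.tsum_le_tsum fun k => ?_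
    calc ∑' w : V (k + N), Metric.ediam (cylinder w.1) ^ d
        ≤ ∑' _ : V (k + N), ENNReal.ofReal ((K : ℝ)⁻¹ ^ (k + N)) ^ d :=
          ENNReal.tsum_le_tsum fun w => ENNReal.rpow_le_rpow (ediam_cylinder_le _) hd
      _ = b (k + N) := by rw [tsum_fintype, Finset.sum_const, Finset.card_univ,
          Fintype.card_coe, nsmul_eq_mul]
  refine nonpos_iff_eq_zero.1 ?_
  calc μH[d] s ≤ liminf (fun N => ∑' i, Metric.ediam (t N i) ^ d) atTop :=
        Measure.hausdorffMeasure_le_liminf_tsum d s _ hr t (Eventually.of_forall ht)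
          (Eventually.of_forall hst)
    _ ≤ liminf (fun N => ∑' k, b (k + N)) atTop := liminf_le_liminf (Eventually.of_forall htsum)
    _ = 0 := (ENNReal.tendsto_sum_nat_add b hV).liminf_eq

end SymbSp

section Dimension

variable {ι : Type*} [Fintype ι] [DecidableEq ι] {K : ℕ} {𝒦 : ι → Finset (Fin K)}

theorem hausdorffMeasure_setOf_frequently_classFreq_mem_eq_zero (hK : 1 < K)
    (hdisj : ∀ i j, i ≠ j → Disjoint (𝒦 i) (𝒦 j)) (hcover : ∀ a, ∃ i, a ∈ 𝒦 i)
    (hne : ∀ i, (𝒦 i).Nonempty) {S : Set (ι → ℝ)} {s d : ℝ}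
    (hS : ∀ q ∈ S, classEntropy 𝒦 q ≤ s * log K) (hsd : s < d) (hd : 0 ≤ d) :
    μH[d] {x : SymbSp K | ∃ᶠ n in atTop, classFreq 𝒦 x n ∈ S} = 0 := by
  classical
  have hlogK : 0 < log K := log_pos (by exact_mod_cast hK)
  set ρ := exp ((s - d) * log K) with hρ
  have hρ1 : ρ < 1 := exp_lt_one_iff.2 (mul_neg_of_neg_of_pos (sub_neg.2 hsd) hlogK)
  let V : ∀ n, Finset (Fin n → Fin K) := fun n =>
    {w | (fun i => (classCount 𝒦 w i : ℝ) / n) ∈ S}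
  have hterm : ∀ n : ℕ, (#(V n) : ℝ≥0∞) * ENNReal.ofReal ((K : ℝ)⁻¹ ^ n) ^ d ≤
      ENNReal.ofReal ((n + 1) ^ Fintype.card ι * ρ ^ n) := by
    intro n
    have hpow : ((K : ℝ)⁻¹ ^ n) ^ d = exp (-(n * (d * log K))) := by
      rw [rpow_def_of_pos (by positivity), log_pow, log_inv]
      ring_nf
    rw [← ENNReal.ofReal_natCast, ENNReal.ofReal_rpow_of_nonneg (by positivity) hd,
      ← ENNReal.ofReal_mul (Nat.cast_nonneg _)]
    refine ENNReal.ofReal_le_ofReal ?_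
    calc (#(V n) : ℝ) * ((K : ℝ)⁻¹ ^ n) ^ d
        ≤ (n + 1) ^ Fintype.card ι * exp (n * (s * log K)) * exp (-(n * (d * log K))) := by
          rw [hpow]
          gcongr
          exact card_classCount_div_mem_le hdisj hcover hne hS n
      _ = (n + 1) ^ Fintype.card ι * ρ ^ n := by
          rw [mul_assoc, ← exp_add, hρ, ← exp_nat_mul]
          ring_nf
  refine SymbSp.hausdorffMeasure_eq_zero_of_frequently_mem_cylinder hK hd V
    (fun x hx => hx.mono fun n hn => ?_) ?_
  · rw [classFreq_eq x n] at hn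
    simpa [V] using hn
  · refine ne_top_of_le_ne_top ?_ (ENNReal.tsum_le_tsum hterm)
    rw [← ENNReal.ofReal_tsum_of_nonneg (fun n => by positivity)
      (summable_succ_pow_mul_geometric _ (exp_pos _) hρ1)]
    exact ENNReal.ofReal_ne_top

theorem dimH_setOf_frequently_classFreq_mem_le (hK : 1 < K)
    (hdisj : ∀ i j, i ≠ j → Disjoint (𝒦 i) (𝒦 j)) (hcover : ∀ a, ∃ i, a ∈ 𝒦 i)
    (hne : ∀ i, (𝒦 i).Nonempty) {S : Set (ι → ℝ)} {s : ℝ}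
    (hS : ∀ q ∈ S, classEntropy 𝒦 q ≤ s * log K) :
    dimH {x : SymbSp K | ∃ᶠ n in atTop, classFreq 𝒦 x n ∈ S} ≤ ENNReal.ofReal s := by
  refine dimH_le fun d hd => le_of_not_gt fun hlt => ?_
  have hsd : s < d := (ENNReal.ofReal_lt_ofReal_iff'.1 (by rwa [ENNReal.ofReal_coe_nnreal])).1
  rw [hausdorffMeasure_setOf_frequently_classFreq_mem_eq_zero hK hdisj hcover hne hS hsd
    d.2] at hd
  exact ENNReal.zero_ne_top hd

theorem dimH_setOf_exists_mapClusterPt_classFreq_le (hK : 1 < K)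
    (hdisj : ∀ i j, i ≠ j → Disjoint (𝒦 i) (𝒦 j)) (hcover : ∀ a, ∃ i, a ∈ 𝒦 i)
    (hne : ∀ i, (𝒦 i).Nonempty) {P : Set (ι → ℝ)} (hPIcc : P ⊆ Set.Icc 0 1) {s₀ : ℝ}
    (hP : ∀ p ∈ P, classEntropy 𝒦 p ≤ s₀ * log K) :
    dimH {x : SymbSp K | ∃ r ∈ P, MapClusterPt r atTop (classFreq 𝒦 x)} ≤
      ENNReal.ofReal s₀ := by
  have hlogK : 0 < log K := log_pos (by exact_mod_cast hK)
  refine le_of_forall_gt_imp_ge_of_dense fun b hb => ?_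
  obtain ⟨s, -, hs₀s, hsb⟩ := ENNReal.lt_iff_exists_real_btwn.1 hb
  have hs : s₀ < s := (ENNReal.ofReal_lt_ofReal_iff'.1 hs₀s).1
  obtain ⟨δ, hδ, hclose⟩ := Metric.uniformContinuousOn_iff.1
    (isCompact_Icc.uniformContinuousOn_of_continuous (continuous_classEntropy 𝒦).continuousOn)
    ((s - s₀) * log K) (mul_pos (sub_pos.2 hs) hlogK)
  let S := {q ∈ Set.Icc (0 : ι → ℝ) 1 | ∃ p ∈ P, dist q p < δ}
  have hS : ∀ q ∈ S, classEntropy 𝒦 q ≤ s * log K := by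
    rintro q ⟨hq, p, hp, hqp⟩
    have hqp' := (abs_lt.1 (hclose q hq p (hPIcc hp) hqp)).2
    linarith [hP p hp]
  have hE : {x : SymbSp K | ∃ r ∈ P, MapClusterPt r atTop (classFreq 𝒦 x)} ⊆
      {x | ∃ᶠ n in atTop, classFreq 𝒦 x n ∈ S} := by
    rintro x ⟨r, hr, hcl⟩
    exact (mapClusterPt_iff_frequently.1 hcl _ (Metric.ball_mem_nhds r hδ)).mono
      fun n hn => ⟨classFreq_mem_Icc x n, r, hr, hn⟩
  calc _ ≤ _ := dimH_mono hE
    _ ≤ ENNReal.ofReal s := dimH_setOf_frequently_classFreq_mem_le hK hdisj hcover hne hS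
    _ ≤ b := hsb.le

end Dimension

open Classical in
theorem statement_15_general (K m : ℕ) (hK : 2 ≤ K)
    (𝒦 : Fin m → Finset (Fin K)) (hne : ∀ i, (𝒦 i).Nonempty)
    (hdisj : ∀ i j, i ≠ j → Disjoint (𝒦 i) (𝒦 j))
    (hcover : ∀ a : Fin K, ∃ i, a ∈ 𝒦 i)
    (P : Set (Fin m → ℝ))
    (hPQ : ∀ p ∈ P, (∀ i, 0 ≤ p i ∧ p i ≤ 1) ∧ (∑ i, p i) = 1) :
    dimH {x : SymbSp K | ∃ r ∈ P, MapClusterPt r Filter.atTop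
        (fun n : ℕ => fun i : Fin m =>
          (((Finset.range n).filter (fun j => x j ∈ 𝒦 i)).card : ℝ) / n)} ≤
      ENNReal.ofReal (sSup ((fun p : Fin m → ℝ =>
        (∑ i, -(p i * Real.log (p i / (𝒦 i).card))) / Real.log K) '' P)) := by
  have hlogK : 0 < log K := log_pos (by exact_mod_cast hK)
  have hPIcc : P ⊆ Set.Icc 0 1 := fun p hp =>
    ⟨fun i => ((hPQ p hp).1 i).1, fun i => ((hPQ p hp).1 i).2⟩
  have hbdd : BddAbove ((fun p => classEntropy 𝒦 p / log K) '' P) := by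
    obtain ⟨B, hB⟩ := (isCompact_Icc.image (continuous_classEntropy 𝒦)).bddAbove
    exact ⟨B / log K, forall_mem_image.2 fun p hp =>
      div_le_div_of_nonneg_right (hB (mem_image_of_mem _ (hPIcc hp))) hlogK.le⟩
  have hsup : ∀ p ∈ P,
      classEntropy 𝒦 p ≤ sSup ((fun p => classEntropy 𝒦 p / log K) '' P) * log K := fun p hp =>
    (div_le_iff₀ hlogK).1 (le_csSup hbdd (mem_image_of_mem _ hp))
  -- the statement filters by classical decidability of membership, `classFreq` by `DecidableEq`
  convert dimH_setOf_exists_mapClusterPt_classFreq_le (by omega) hdisj hcover hne hPIcc hsup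
    using 3
  · unfold classFreq
    congr!
  · rfl

open Classical in
/-- Let `K ≥ 2`, `m ≥ 2`, `𝒦` a partition of `{0,…,K−1}` into
nonempty sets, and `∅ ≠ P ⊆ Q_m`. Then the set of `x ∈ Σ_K` whose distributional
density spectrum `μ_𝒦(x)` (the set of limit points of the frequency vectors
`μ_{𝒦,n}(x)`) meets `P` has Hausdorff dimension at most `sup g_𝒦(P)`, where
`g_𝒦(p) = (∑_i −p_i ln(p_i/#K_i)) / ln K`. -/
theorem statement_15 (K m : ℕ) (hK : 2 ≤ K) (hm : 2 ≤ m)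
    (𝒦 : Fin m → Finset (Fin K)) (hne : ∀ i, (𝒦 i).Nonempty)
    (hdisj : ∀ i j, i ≠ j → Disjoint (𝒦 i) (𝒦 j))
    (hcover : ∀ a : Fin K, ∃ i, a ∈ 𝒦 i)
    (P : Set (Fin m → ℝ)) (hP : P.Nonempty)
    (hPQ : ∀ p ∈ P, (∀ i, 0 ≤ p i ∧ p i ≤ 1) ∧ (∑ i, p i) = 1) :
    dimH {x : SymbSp K | ∃ r ∈ P, MapClusterPt r Filter.atTop
        (fun n : ℕ => fun i : Fin m =>
          (((Finset.range n).filter (fun j => x j ∈ 𝒦 i)).card : ℝ) / n)} ≤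
      ENNReal.ofReal (sSup ((fun p : Fin m → ℝ =>
        (∑ i, -(p i * Real.log (p i / (𝒦 i).card))) / Real.log K) '' P)) :=
  statement_15_general K m hK 𝒦 hne hdisj hcover P hPQ
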